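/- Every rewriting sequence based on the reading and merging rules of the suspension calculus terminates, i.e., the rewrite relation generated by rules (r1)-(r6) and (m1)-(m6) applied at arbitrary subexpressions is strongly normalizing on well-formed suspension expressions. -/

import Mathlib

/- Terms of the suspension calculus: constants, de Bruijn indices `#i`,
applications, abstractions, and suspensions `[t, ol, nl, e]`. -/
mutual
inductive Tm : Type where
  | const : Nat → Tm
  | idx : Nat → Tm
  | app : Tm → Tm → Tm
  | lam : Tm → Tm
  | susp : Tm → Nat → Nat → Env → Tm
/-- Environments: `nil`, cons cells `(t,n)::e`, and merges `{e1, nl1, ol2, e2}`. -/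
inductive Env : Type where
  | nil : Env
  | econs : Tm → Nat → Env → Env
  | merge : Env → Nat → Nat → Env → Env
end

/-- Length of an environment. -/
def Env.len : Env → Nat
  | .nil => 0
  | .econs _ _ e => 1 + Env.len e
  | .merge e1 nl1 _ e2 => Env.len e1 + (Env.len e2 - nl1)

/-- Level of an environment. -/
def Env.lev : Env → Nat
  | .nil => 0
  | .econs _ l _ => l
  | .merge _ nl1 ol2 e2 => Env.lev e2 + (nl1 - ol2)

/- Well-formedness of suspension expressions. -/
mutual
inductive WfTm : Tm → Prop where
  | const : ∀ c, WfTm (.const c)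
  | idx : ∀ i, 1 ≤ i → WfTm (.idx i)
  | app : ∀ {t1 t2}, WfTm t1 → WfTm t2 → WfTm (.app t1 t2)
  | lam : ∀ {t}, WfTm t → WfTm (.lam t)
  | susp : ∀ {t e} (ol nl : Nat), WfTm t → WfEnv e → Env.len e = ol →
      Env.lev e ≤ nl → WfTm (.susp t ol nl e)
inductive WfEnv : Env → Prop where
  | nil : WfEnv .nil
  | econs : ∀ {t e} (l : Nat), WfTm t → WfEnv e → Env.lev e ≤ l → WfEnv (.econs t l e)
  | merge : ∀ {e1 e2} (nl1 ol2 : Nat), WfEnv e1 → WfEnv e2 → Env.lev e1 ≤ nl1 →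
      Env.len e2 = ol2 → WfEnv (.merge e1 nl1 ol2 e2)
end

/- One-step rewriting by the reading rules (r1)-(r6) and merging rules
(m1)-(m6), applied at any subexpression. -/
mutual
inductive SR : Tm → Tm → Prop where
  | r1 : ∀ c ol nl e, SR (.susp (.const c) ol nl e) (.const c)
  | r2 : ∀ i nl, 1 ≤ i → SR (.susp (.idx i) 0 nl .nil) (.idx (i + nl))
  | r3 : ∀ ol nl t l e, SR (.susp (.idx 1) ol nl (.econs t l e)) (.susp t 0 (nl - l) .nil)
  | r4 : ∀ i ol nl t l e, 1 < i →
      SR (.susp (.idx i) ol nl (.econs t l e)) (.susp (.idx (i - 1)) (ol - 1) nl e)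
  | r5 : ∀ t1 t2 ol nl e,
      SR (.susp (.app t1 t2) ol nl e) (.app (.susp t1 ol nl e) (.susp t2 ol nl e))
  | r6 : ∀ t ol nl e,
      SR (.susp (.lam t) ol nl e)
         (.lam (.susp t (ol + 1) (nl + 1) (.econs (.idx 1) (nl + 1) e)))
  | m1 : ∀ t ol1 nl1 e1 ol2 nl2 e2,
      SR (.susp (.susp t ol1 nl1 e1) ol2 nl2 e2)
         (.susp t (ol1 + (ol2 - nl1)) (nl2 + (nl1 - ol2)) (.merge e1 nl1 ol2 e2))
  | appL : ∀ {t1 t1'} (t2 : Tm), SR t1 t1' → SR (.app t1 t2) (.app t1' t2)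
  | appR : ∀ (t1 : Tm) {t2 t2'}, SR t2 t2' → SR (.app t1 t2) (.app t1 t2')
  | lamC : ∀ {t t'}, SR t t' → SR (.lam t) (.lam t')
  | suspT : ∀ {t t'} ol nl e, SR t t' → SR (.susp t ol nl e) (.susp t' ol nl e)
  | suspE : ∀ t ol nl {e e'}, SRE e e' → SR (.susp t ol nl e) (.susp t ol nl e')
inductive SRE : Env → Env → Prop where
  | m2 : ∀ e1 nl1, SRE (.merge e1 nl1 0 .nil) e1
  | m3 : ∀ ol2 e2, SRE (.merge .nil 0 ol2 e2) e2
  | m4 : ∀ nl1 ol2 t l e2, 1 ≤ nl1 →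
      SRE (.merge .nil nl1 ol2 (.econs t l e2)) (.merge .nil (nl1 - 1) (ol2 - 1) e2)
  | m5 : ∀ t n e1 nl1 ol2 s l e2, n < nl1 →
      SRE (.merge (.econs t n e1) nl1 ol2 (.econs s l e2))
          (.merge (.econs t n e1) (nl1 - 1) (ol2 - 1) e2)
  | m6 : ∀ t n e1 ol2 s l e2,
      SRE (.merge (.econs t n e1) n ol2 (.econs s l e2))
          (.econs (.susp t ol2 l (.econs s l e2)) (l + (n - ol2))
                  (.merge e1 n ol2 (.econs s l e2)))
  | consT : ∀ {t t'} l e, SR t t' → SRE (.econs t l e) (.econs t' l e)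
  | consE : ∀ t l {e e'}, SRE e e' → SRE (.econs t l e) (.econs t l e')
  | mergeL : ∀ {e1 e1'} nl1 ol2 e2, SRE e1 e1' →
      SRE (.merge e1 nl1 ol2 e2) (.merge e1' nl1 ol2 e2)
  | mergeR : ∀ e1 nl1 ol2 {e2 e2'}, SRE e2 e2' →
      SRE (.merge e1 nl1 ol2 e2) (.merge e1 nl1 ol2 e2')
end

/-!
Interpret expressions in `ℕ` by `weight`: `[t, ol, nl, e] ↦ weight t * weight e`,
`(t, l) :: e ↦ max (2 * weight t) (weight e)` and `{e₁, nl, ol, e₂} ↦ weight e₁ * weight e₂`.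
No rule increases the weight. A suspension `[b, ol, nl, f]` or a merge `{e₁, nl, ol, e₂}` whose
components are strongly normalizing is then strongly normalizing, by well-founded induction on a
lexicographic measure: first the weight of the redex (for a suspension plus `spineTag f`, because
(r3) may keep the weight while replacing a cons cell by `nil`), then the ordinal ranks of its two
components for "one-step reduct or immediate subexpression". That relation is well founded below
every strongly normalizing expression because reduction commutes with taking subexpressions, and
every reduct of the redex lowers the measure.
-/

theorem Acc.of_map {α β : Type*} {r : α → α → Prop} {s : β → β → Prop} (f : α → β)
    (hf : ∀ {a b}, r a b → s (f a) (f b)) {a : α} (h : Acc (fun x y => s y x) (f a)) :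
    Acc (fun x y => r y x) a :=
  Subrelation.accessible hf (InvImage.accessible f h)

theorem Acc.or_of_commute {α : Type*} {r s : α → α → Prop} (hs : WellFounded s)
    (hcomm : ∀ {x y z}, s x y → r z x → ∃ w, r w y ∧ s z w) {y : α} (hy : Acc r y) :
    Acc (fun a b => r a b ∨ s a b) y := by
  have lift : ∀ {x y}, Relation.ReflTransGen s x y → ∀ {z}, r z x →
      ∃ w, r w y ∧ Relation.ReflTransGen s z w := by
    intro x y hxy
    induction hxy using Relation.ReflTransGen.head_induction_on with
    | refl => exact fun hz => ⟨_, hz, .refl⟩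
    | head hxw _ ih =>
      intro z hz
      obtain ⟨w, hw, hzw⟩ := hcomm hxw hz
      obtain ⟨v, hv, hwv⟩ := ih hw
      exact ⟨v, hv, .head hzw hwv⟩
  suffices ∀ x, Relation.ReflTransGen s x y → Acc (fun a b => r a b ∨ s a b) x from
    this y .refl
  induction hy with
  | intro y _ ihr =>
    intro x hxy
    induction x using hs.induction with
    | _ x ihs =>
      refine ⟨_, fun z hz => hz.elim (fun hr => ?_) (fun hsz => ihs z hsz (.head hsz hxy))⟩
      obtain ⟨w, hw, hzw⟩ := lift hxy hr
      exact ihr w hw z hzw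

mutual
def Tm.weight : Tm → ℕ
  | .const _ => 1
  | .idx _ => 1
  | .app s t => s.weight + t.weight + 1
  | .lam t => t.weight + 1
  | .susp t _ _ e => t.weight * e.weight
def Env.weight : Env → ℕ
  | .nil => 2
  | .econs t _ e => max (2 * t.weight) e.weight
  | .merge e₁ _ _ e₂ => e₁.weight * e₂.weight
end

mutual
theorem Tm.one_le_weight : (t : Tm) → 1 ≤ t.weight
  | .const _ | .idx _ => le_rfl
  | .app _ _ | .lam _ => by simp [Tm.weight]
  | .susp t _ _ e => by
      have := t.one_le_weight
      have := e.two_le_weight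
      simp only [Tm.weight]
      nlinarith
theorem Env.two_le_weight : (e : Env) → 2 ≤ e.weight
  | .nil => le_rfl
  | .econs _ _ e => le_max_of_le_right e.two_le_weight
  | .merge e₁ _ _ e₂ => by
      have := e₁.two_le_weight
      have := e₂.two_le_weight
      simp only [Env.weight]
      nlinarith
end

mutual
theorem SR.weight_le : ∀ {t u : Tm}, SR t u → u.weight ≤ t.weight
  | _, _, .r1 _ _ _ e | _, _, .r5 _ _ _ _ e => by
      simp only [Tm.weight]; nlinarith [e.two_le_weight]
  | _, _, .r2 .. => by simp [Tm.weight, Env.weight]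
  | _, _, .r3 .. | _, _, .r4 .. => by
      simp only [Tm.weight, Env.weight]; omega
  | _, _, .r6 _ _ _ e => by
      simp only [Tm.weight, Env.weight, max_eq_right e.two_le_weight]
      nlinarith [e.two_le_weight]
  | _, _, .m1 .. => by
      simp only [Tm.weight, Env.weight, Nat.mul_assoc, le_refl]
  | _, _, .appL _ h | _, _, .appR _ h | _, _, .lamC h => by
      have := h.weight_le; simp only [Tm.weight]; omega
  | _, _, .suspT _ _ _ h => Nat.mul_le_mul_right _ h.weight_le
  | _, _, .suspE _ _ _ h => Nat.mul_le_mul_left _ h.weight_le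
theorem SRE.weight_le : ∀ {e f : Env}, SRE e f → f.weight ≤ e.weight
  | _, _, .m2 .. | _, _, .m3 .. | _, _, .m4 .. => by
      simp only [Env.weight]; omega
  | _, _, .m5 .. => Nat.mul_le_mul_left _ (le_max_right _ _)
  | _, _, .m6 .. => by
      simp only [Env.weight, Tm.weight, ← Nat.mul_assoc]
      exact max_le (Nat.mul_le_mul_right _ (le_max_left _ _))
        (Nat.mul_le_mul_right _ (le_max_right _ _))
  | _, _, .consT _ _ h => max_le_max (Nat.mul_le_mul_left 2 h.weight_le) le_rfl
  | _, _, .consE _ _ h => max_le_max le_rfl h.weight_le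
  | _, _, .mergeL _ _ _ h => Nat.mul_le_mul_right _ h.weight_le
  | _, _, .mergeR _ _ _ h => Nat.mul_le_mul_left _ h.weight_le
end

def Env.spineTag : Env → ℕ
  | .nil => 0
  | .econs .. => 1
  | .merge _ _ _ e₂ => e₂.spineTag

theorem Env.spineTag_le_one : (e : Env) → e.spineTag ≤ 1
  | .nil | .econs .. => by simp [Env.spineTag]
  | .merge _ _ _ e₂ => e₂.spineTag_le_one

theorem SRE.weight_lt_or_spineTag_le : ∀ {e f : Env}, SRE e f →
    f.weight < e.weight ∨ f.spineTag ≤ e.spineTag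
  | _, _, .m2 e₁ _ => by
      left; have := e₁.two_le_weight; simp only [Env.weight]; omega
  | _, _, .m4 _ _ _ _ e₂ _ | _, _, .m5 _ _ _ _ _ _ _ e₂ _ => by
      right; simpa [Env.spineTag] using e₂.spineTag_le_one
  | _, _, .m3 .. | _, _, .m6 .. | _, _, .consT .. | _, _, .consE .. | _, _, .mergeL .. => by
      right; simp [Env.spineTag]
  | _, _, .mergeR e₁ _ _ h => by
      simp only [Env.weight, Env.spineTag]
      refine h.weight_lt_or_spineTag_le.imp (fun hlt => ?_) id
      exact Nat.mul_lt_mul_of_pos_left hlt (by have := e₁.two_le_weight; omega)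

def suspWeight (b : Tm) (f : Env) : ℕ := b.weight * f.weight + f.spineTag

theorem suspWeight_le_of_sr {b b' : Tm} (h : SR b b') (f : Env) :
    suspWeight b' f ≤ suspWeight b f :=
  Nat.add_le_add_right (Nat.mul_le_mul_right _ h.weight_le) _

theorem suspWeight_le_of_sre {f f' : Env} (h : SRE f f') (b : Tm) :
    suspWeight b f' ≤ suspWeight b f := by
  have := b.one_le_weight
  have := f'.spineTag_le_one
  unfold suspWeight
  rcases h.weight_lt_or_spineTag_le with hlt | hle
  · nlinarith
  · nlinarith [h.weight_le]

theorem suspWeight_nil_lt_idx_econs (t : Tm) (i l : ℕ) (e : Env) :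
    suspWeight t .nil < suspWeight (.idx i) (.econs t l e) := by
  simp only [suspWeight, Tm.weight, Env.weight, Env.spineTag]
  omega

theorem suspWeight_idx_le_idx_econs (i j : ℕ) (t : Tm) (l : ℕ) (e : Env) :
    suspWeight (.idx j) e ≤ suspWeight (.idx i) (.econs t l e) := by
  have := e.spineTag_le_one
  simp only [suspWeight, Tm.weight, Env.weight, Env.spineTag]
  omega

theorem suspWeight_lt_app_left (t₁ t₂ : Tm) (f : Env) :
    suspWeight t₁ f < suspWeight (.app t₁ t₂) f := by
  have := f.two_le_weight
  simp only [suspWeight, Tm.weight]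
  nlinarith

theorem suspWeight_lt_app_right (t₁ t₂ : Tm) (f : Env) :
    suspWeight t₂ f < suspWeight (.app t₁ t₂) f := by
  have := f.two_le_weight
  simp only [suspWeight, Tm.weight]
  nlinarith

theorem suspWeight_econs_lt_lam (t : Tm) (l : ℕ) (f : Env) :
    suspWeight t (.econs (.idx 1) l f) < suspWeight (.lam t) f := by
  have := f.two_le_weight
  simp only [suspWeight, Tm.weight, Env.weight, Env.spineTag, max_eq_right this]
  nlinarith

theorem suspWeight_merge (t : Tm) (ol nl nl₁ ol₂ : ℕ) (e₁ f : Env) :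
    suspWeight t (.merge e₁ nl₁ ol₂ f) = suspWeight (.susp t ol nl e₁) f := by
  simp only [suspWeight, Tm.weight, Env.weight, Env.spineTag, Nat.mul_assoc]

theorem weight_mul_weight_le_suspWeight_susp (t : Tm) (ol nl : ℕ) (e₁ f : Env) :
    e₁.weight * f.weight ≤ suspWeight (.susp t ol nl e₁) f := by
  simp only [suspWeight, Tm.weight, Nat.mul_assoc]
  exact Nat.le_add_right_of_le (Nat.le_mul_of_pos_left _ t.one_le_weight)

theorem suspWeight_lt_econs_weight_mul (t : Tm) (n : ℕ) (e₁ e : Env) :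
    suspWeight t e < (Env.econs t n e₁).weight * e.weight := by
  have := t.one_le_weight
  have := e.two_le_weight
  have := e.spineTag_le_one
  have := le_max_left (2 * t.weight) e₁.weight
  simp only [suspWeight, Env.weight] at *
  nlinarith

abbrev Tm.SN (t : Tm) : Prop := Acc (fun a b => SR b a) t

abbrev Env.SN (e : Env) : Prop := Acc (fun a b => SRE b a) e

namespace Tm

theorem sn_const (c : ℕ) : (const c).SN := ⟨_, fun _ h => nomatch h⟩

theorem sn_idx (i : ℕ) : (idx i).SN := ⟨_, fun _ h => nomatch h⟩

theorem SN.app {t₁ t₂ : Tm} (h₁ : t₁.SN) (h₂ : t₂.SN) : (Tm.app t₁ t₂).SN := by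
  refine Acc.of_downward_closed (rβ := fun a b => SR b a) (fun p : Tm × Tm => Tm.app p.1 p.2)
    ?_ (t₁, t₂) (Subrelation.accessible ?_ (h₁.prod_gameAdd h₂))
  · rintro ⟨a₁, a₂⟩ _ h
    cases h with
    | @appL _ b₁ _ _ => exact ⟨(b₁, a₂), rfl⟩
    | @appR _ _ b₂ _ => exact ⟨(a₁, b₂), rfl⟩
  · rintro ⟨a₁, a₂⟩ ⟨b₁, b₂⟩ (_ | _)
    exacts [.fst ‹_›, .snd ‹_›]

theorem SN.lam {t : Tm} (h : t.SN) : (Tm.lam t).SN := by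
  induction h with
  | intro t _ ih => exact ⟨_, fun _ h => by cases h with | lamC h => exact ih _ h⟩

theorem SN.of_app_left {t₁ t₂ : Tm} (h : (Tm.app t₁ t₂).SN) : t₁.SN :=
  h.of_map (Tm.app · t₂) (SR.appL t₂)

theorem SN.of_app_right {t₁ t₂ : Tm} (h : (Tm.app t₁ t₂).SN) : t₂.SN :=
  h.of_map (Tm.app t₁) (SR.appR t₁)

theorem SN.of_lam {t : Tm} (h : (Tm.lam t).SN) : t.SN :=
  h.of_map Tm.lam SR.lamC

theorem SN.of_susp_left {t : Tm} {ol nl : ℕ} {e : Env} (h : (susp t ol nl e).SN) : t.SN :=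
  h.of_map (susp · ol nl e) (SR.suspT ol nl e)

theorem SN.of_susp_right {t : Tm} {ol nl : ℕ} {e : Env} (h : (susp t ol nl e).SN) : e.SN :=
  h.of_map (susp t ol nl) (SR.suspE t ol nl)

end Tm

namespace Env

theorem sn_nil : nil.SN := ⟨_, fun _ h => nomatch h⟩

theorem SN.econs {t : Tm} {e : Env} (ht : t.SN) (he : e.SN) (l : ℕ) : (Env.econs t l e).SN := by
  refine Acc.of_downward_closed (rβ := fun a b => SRE b a)
    (fun p : Tm × Env => Env.econs p.1 l p.2) ?_ (t, e)
    (Subrelation.accessible ?_ (ht.prod_gameAdd he))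
  · rintro ⟨a₁, a₂⟩ _ h
    cases h with
    | @consT _ b₁ _ _ _ => exact ⟨(b₁, a₂), rfl⟩
    | @consE _ _ _ b₂ _ => exact ⟨(a₁, b₂), rfl⟩
  · rintro ⟨a₁, a₂⟩ ⟨b₁, b₂⟩ (_ | _)
    exacts [.fst ‹_›, .snd ‹_›]

theorem SN.of_econs_left {t : Tm} {l : ℕ} {e : Env} (h : (Env.econs t l e).SN) : t.SN :=
  h.of_map (Env.econs · l e) (SRE.consT l e)

theorem SN.of_econs_right {t : Tm} {l : ℕ} {e : Env} (h : (Env.econs t l e).SN) : e.SN :=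
  h.of_map (Env.econs t l) (SRE.consE t l)

end Env

namespace SuspensionCalculus

open Sum

inductive Step : Tm ⊕ Env → Tm ⊕ Env → Prop
  | tm {t u : Tm} : SR t u → Step (inl t) (inl u)
  | env {e f : Env} : SRE e f → Step (inr e) (inr f)

inductive Subexpr : Tm ⊕ Env → Tm ⊕ Env → Prop
  | appL {t₁ t₂ : Tm} : Subexpr (inl t₁) (inl (.app t₁ t₂))
  | appR {t₁ t₂ : Tm} : Subexpr (inl t₂) (inl (.app t₁ t₂))
  | lam {t : Tm} : Subexpr (inl t) (inl (.lam t))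
  | suspT {t : Tm} {ol nl : ℕ} {e : Env} : Subexpr (inl t) (inl (.susp t ol nl e))
  | suspE {t : Tm} {ol nl : ℕ} {e : Env} : Subexpr (inr e) (inl (.susp t ol nl e))
  | econsT {t : Tm} {l : ℕ} {e : Env} : Subexpr (inl t) (inr (.econs t l e))
  | econsE {t : Tm} {l : ℕ} {e : Env} : Subexpr (inr e) (inr (.econs t l e))
  | mergeL {e₁ e₂ : Env} {nl ol : ℕ} : Subexpr (inr e₁) (inr (.merge e₁ nl ol e₂))
  | mergeR {e₁ e₂ : Env} {nl ol : ℕ} : Subexpr (inr e₂) (inr (.merge e₁ nl ol e₂))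

theorem Subexpr.wellFounded : WellFounded Subexpr :=
  Subrelation.wf (r := InvImage (· < ·) sizeOf)
    (fun h => by cases h <;> simp +arith [InvImage]) (InvImage.wf sizeOf wellFounded_lt)

theorem Subexpr.exists_step {x y z : Tm ⊕ Env} (hxy : Subexpr x y) (hxz : Step x z) :
    ∃ w, Step y w ∧ Subexpr z w := by
  cases hxy with
  | appL => cases hxz with | tm h => exact ⟨_, .tm (.appL _ h), .appL⟩
  | appR => cases hxz with | tm h => exact ⟨_, .tm (.appR _ h), .appR⟩
  | lam => cases hxz with | tm h => exact ⟨_, .tm (.lamC h), .lam⟩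
  | suspT => cases hxz with | tm h => exact ⟨_, .tm (.suspT _ _ _ h), .suspT⟩
  | suspE => cases hxz with | env h => exact ⟨_, .tm (.suspE _ _ _ h), .suspE⟩
  | econsT => cases hxz with | tm h => exact ⟨_, .env (.consT _ _ h), .econsT⟩
  | econsE => cases hxz with | env h => exact ⟨_, .env (.consE _ _ h), .econsE⟩
  | mergeL => cases hxz with | env h => exact ⟨_, .env (.mergeL _ _ _ h), .mergeL⟩
  | mergeR => cases hxz with | env h => exact ⟨_, .env (.mergeR _ _ _ h), .mergeR⟩

def Below (x y : Tm ⊕ Env) : Prop := Step y x ∨ Subexpr x y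

theorem acc_below_inl {t : Tm} (ht : t.SN) : Acc Below (inl t) := by
  refine Acc.or_of_commute Subexpr.wellFounded Subexpr.exists_step ?_
  induction ht with
  | intro t _ ih => exact ⟨_, fun _ h => by cases h with | tm h => exact ih _ h⟩

theorem acc_below_inr {e : Env} (he : e.SN) : Acc Below (inr e) := by
  refine Acc.or_of_commute Subexpr.wellFounded Subexpr.exists_step ?_
  induction he with
  | intro e _ ih => exact ⟨_, fun _ h => by cases h with | env h => exact ih _ h⟩

open Classical in
noncomputable def rank (x : Tm ⊕ Env) : Ordinal := if h : Acc Below x then h.rank else 0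

theorem rank_lt_of_below {x y : Tm ⊕ Env} (hy : Acc Below y) (h : Below x y) :
    rank x < rank y := by
  rw [rank, rank, dif_pos (hy.inv h), dif_pos hy]
  exact hy.rank_lt_of_rel h

theorem rank_idx (i : ℕ) : rank (inl (.idx i)) = 0 := by
  have hmin : ∀ x, ¬ Below x (inl (.idx i)) := by
    rintro x (h | h)
    · cases h with | tm h => cases h
    · cases h
  have : IsEmpty {x // Below x (inl (.idx i))} := ⟨fun x => hmin x.1 x.2⟩
  rw [rank, dif_pos ⟨_, fun x h => (hmin x h).elim⟩, Acc.rank_eq]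
  exact ciSup_of_empty _

abbrev LexMeasure := ℕ ×ₗ Ordinal.{0} ×ₗ Ordinal.{0}

noncomputable def redexMeasure (w : ℕ) (x : Tm ⊕ Env) (e : Env) : LexMeasure :=
  toLex (w, toLex (rank x, rank (inr e)))

section redexMeasure

variable {w w' : ℕ} {x x' : Tm ⊕ Env} {e e' : Env}

theorem redexMeasure_lt_of_weight_lt (h : w < w') : redexMeasure w x e < redexMeasure w' x' e' :=
  Prod.Lex.toLex_lt_toLex.2 (.inl h)

theorem redexMeasure_lt_of_rank_lt (hw : w ≤ w') (h : rank x < rank x') :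
    redexMeasure w x e < redexMeasure w' x' e' :=
  Prod.Lex.toLex_lt_toLex'.2 ⟨hw, fun _ => Prod.Lex.toLex_lt_toLex.2 (.inl h)⟩

theorem redexMeasure_lt_of_env_rank_lt (hw : w ≤ w') (hx : rank x = rank x')
    (h : rank (inr e) < rank (inr e')) : redexMeasure w x e < redexMeasure w' x' e' :=
  Prod.Lex.toLex_lt_toLex'.2 ⟨hw, fun _ => Prod.Lex.toLex_lt_toLex.2 (.inr ⟨hx, h⟩)⟩

end redexMeasure

noncomputable def suspMeasure (b : Tm) (f : Env) : LexMeasure :=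
  redexMeasure (suspWeight b f) (inl b) f

noncomputable def mergeMeasure (e₁ e₂ : Env) : LexMeasure :=
  redexMeasure (e₁.weight * e₂.weight) (inr e₁) e₂

def SNBelow (m : LexMeasure) : Prop :=
  (∀ b f, suspMeasure b f < m → b.SN → f.SN → ∀ ol nl, (Tm.susp b ol nl f).SN) ∧
  (∀ e₁ e₂, mergeMeasure e₁ e₂ < m → e₁.SN → e₂.SN → ∀ nl ol, (Env.merge e₁ nl ol e₂).SN)

theorem sn_susp_of_snBelow {b : Tm} {f : Env} (ih : SNBelow (suspMeasure b f)) (hb : b.SN)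
    (hf : f.SN) (ol nl : ℕ) : (Tm.susp b ol nl f).SN := by
  have hbB := acc_below_inl hb
  have hfB := acc_below_inr hf
  refine ⟨_, fun x hx => ?_⟩
  cases hx with
  | r1 c => exact Tm.sn_const c
  | r2 => exact Tm.sn_idx _
  | r3 _ _ t l e =>
    exact ih.1 t .nil (redexMeasure_lt_of_weight_lt (suspWeight_nil_lt_idx_econs t 1 l e))
      hf.of_econs_left Env.sn_nil _ _
  | r4 i _ _ t l e =>
    exact ih.1 _ e (redexMeasure_lt_of_env_rank_lt (suspWeight_idx_le_idx_econs i _ t l e)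
      (by rw [rank_idx, rank_idx]) (rank_lt_of_below hfB (.inr .econsE)))
      (Tm.sn_idx _) hf.of_econs_right _ _
  | r5 t₁ t₂ =>
    exact Tm.SN.app
      (ih.1 t₁ f (redexMeasure_lt_of_weight_lt (suspWeight_lt_app_left t₁ t₂ f))
        hb.of_app_left hf _ _)
      (ih.1 t₂ f (redexMeasure_lt_of_weight_lt (suspWeight_lt_app_right t₁ t₂ f))
        hb.of_app_right hf _ _)
  | r6 t =>
    exact Tm.SN.lam (ih.1 t _ (redexMeasure_lt_of_weight_lt (suspWeight_econs_lt_lam t _ f))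
      hb.of_lam (Env.SN.econs (Tm.sn_idx 1) hf _) _ _)
  | m1 t ol₁ nl₁ e₁ =>
    have hmerge := ih.2 e₁ f (redexMeasure_lt_of_rank_lt
      (weight_mul_weight_le_suspWeight_susp t ol₁ nl₁ e₁ f) (rank_lt_of_below hbB (.inr .suspE)))
      hb.of_susp_right hf nl₁ ol
    exact ih.1 t _ (redexMeasure_lt_of_rank_lt (suspWeight_merge t ol₁ nl₁ nl₁ ol e₁ f).le
      (rank_lt_of_below hbB (.inr .suspT))) hb.of_susp_left hmerge _ _
  | suspT _ _ _ h =>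
    exact ih.1 _ f (redexMeasure_lt_of_rank_lt (suspWeight_le_of_sr h f)
      (rank_lt_of_below hbB (.inl (.tm h)))) (hb.inv h) hf _ _
  | suspE _ _ _ h =>
    exact ih.1 b _ (redexMeasure_lt_of_env_rank_lt (suspWeight_le_of_sre h b) rfl
      (rank_lt_of_below hfB (.inl (.env h)))) hb (hf.inv h) _ _

theorem sn_merge_of_snBelow {e₁ e₂ : Env} (ih : SNBelow (mergeMeasure e₁ e₂)) (h₁ : e₁.SN)
    (h₂ : e₂.SN) (nl ol : ℕ) : (Env.merge e₁ nl ol e₂).SN := by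
  have h₁B := acc_below_inr h₁
  have h₂B := acc_below_inr h₂
  refine ⟨_, fun x hx => ?_⟩
  cases hx with
  | m2 => exact h₁
  | m3 => exact h₂
  | m4 _ _ t l e₂' =>
    exact ih.2 .nil e₂' (redexMeasure_lt_of_env_rank_lt
      (Nat.mul_le_mul_left _ (le_max_right _ _)) rfl (rank_lt_of_below h₂B (.inr .econsE)))
      Env.sn_nil h₂.of_econs_right _ _
  | m5 _ _ _ _ _ _ _ e₂' =>
    exact ih.2 _ e₂' (redexMeasure_lt_of_env_rank_lt
      (Nat.mul_le_mul_left _ (le_max_right _ _)) rfl (rank_lt_of_below h₂B (.inr .econsE)))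
      h₁ h₂.of_econs_right _ _
  | m6 t _ e₁' =>
    exact Env.SN.econs
      (ih.1 t _ (redexMeasure_lt_of_weight_lt (suspWeight_lt_econs_weight_mul t nl e₁' _))
        h₁.of_econs_left h₂ _ _)
      (ih.2 e₁' _ (redexMeasure_lt_of_rank_lt (Nat.mul_le_mul_right _ (le_max_right _ _))
        (rank_lt_of_below h₁B (.inr .econsE))) h₁.of_econs_right h₂ _ _) _
  | mergeL _ _ _ h =>
    exact ih.2 _ e₂ (redexMeasure_lt_of_rank_lt (Nat.mul_le_mul_right _ h.weight_le)
      (rank_lt_of_below h₁B (.inl (.env h)))) (h₁.inv h) h₂ _ _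
  | mergeR _ _ _ h =>
    exact ih.2 e₁ _ (redexMeasure_lt_of_env_rank_lt (Nat.mul_le_mul_left _ h.weight_le) rfl
      (rank_lt_of_below h₂B (.inl (.env h)))) h₁ (h₂.inv h) _ _

theorem snBelow (m : LexMeasure) : SNBelow m := by
  induction m using WellFoundedLT.induction with
  | _ m ih =>
    exact ⟨fun b f hlt => sn_susp_of_snBelow (ih _ hlt),
      fun e₁ e₂ hlt => sn_merge_of_snBelow (ih _ hlt)⟩

end SuspensionCalculus

open SuspensionCalculus in
mutual
theorem Tm.sn : (t : Tm) → t.SN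
  | .const c => Tm.sn_const c
  | .idx i => Tm.sn_idx i
  | .app t₁ t₂ => Tm.SN.app t₁.sn t₂.sn
  | .lam t => Tm.SN.lam t.sn
  | .susp t ol nl e => sn_susp_of_snBelow (snBelow _) t.sn e.sn ol nl
theorem Env.sn : (e : Env) → e.SN
  | .nil => Env.sn_nil
  | .econs t l e => Env.SN.econs t.sn e.sn l
  | .merge e₁ nl ol e₂ => sn_merge_of_snBelow (snBelow _) e₁.sn e₂.sn nl ol
end

/-- every rewriting sequence based on the reading and merging
rules terminates, i.e. the rewrite relation generated by (r1)-(r6) and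
(m1)-(m6) applied at arbitrary subexpressions is strongly normalizing on
well-formed suspension expressions. -/
theorem rm_strongly_normalizing :
    (∀ t : Tm, WfTm t → Acc (fun a b => SR b a) t) ∧
    (∀ e : Env, WfEnv e → Acc (fun a b => SRE b a) e) :=
  ⟨fun t _ => t.sn, fun e _ => e.sn⟩
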